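/- For all n, ℓ ∈ ℕ, the ℓ-th derivative of the n-th Hermite function satisfies ‖d^ℓ H_n / dx^ℓ‖_{L²(ℝ)} ≤ (2n + 2ℓ)^{ℓ/2}, and the ℓ-fold multiplication by x satisfies ‖x^ℓ H_n(x)‖_{L²(ℝ)} ≤ (2n + 2ℓ)^{ℓ/2}. -/

import Mathlib

/-- The Hermite functions: `H 0 = π^{-1/4} e^{-x²/2}` and `H n = (2^n n!)^{-1/2} (-d/dx + x)^n H 0`. -/
noncomputable def hermiteFun (n : ℕ) : ℝ → ℝ := fun x =>
  ((2 ^ n * n.factorial : ℝ) ^ (-(1 : ℝ) / 2)) *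
    ((fun f : ℝ → ℝ => fun t => -deriv f t + t * f t)^[n]
      (fun t => Real.pi ^ (-(1 : ℝ) / 4) * Real.exp (-(t ^ 2) / 2))) x

/-!
Write `H_n = c_n h_n(x) e^{-x²/2}` with `h_n` the physicists' Hermite polynomials. The recursion
`h_{n+1} = 2x h_n - h_n'` and `h_n' = 2n h_{n-1}` give the ladder relations
`x H_n = √((n+1)/2) H_{n+1} + √(n/2) H_{n-1}` and
`H_n' = √(n/2) H_{n-1} - √((n+1)/2) H_{n+1}`.
Hence multiplication by `x` and differentiation send a combination of `H_0, …, H_N` to one of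
`H_0, …, H_{N+1}` whose `ℓ¹` coefficient norm is larger by a factor at most `√(2N+2)`.
Starting from `H_n` and applying either operator `ℓ` times, the coefficients have `ℓ¹` norm at
most `∏_{k<ℓ} √(2(n+k)+2) ≤ (2n+2ℓ)^{ℓ/2}`, and since `‖H_m‖_{L²} = 1` the triangle inequality
bounds the `L²` norm by that `ℓ¹` norm. Orthogonality of the `H_m` is never needed.
-/
open Polynomial MeasureTheory Real Finset

-- Physicists' Hermite polynomials; Mathlib's `Polynomial.hermite` are the probabilists' ones.
noncomputable def physHermite : ℕ → ℝ[X]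
  | 0 => 1
  | n + 1 => 2 * X * physHermite n - derivative (physHermite n)

theorem physHermite_succ (n : ℕ) :
    physHermite (n + 1) = 2 * X * physHermite n - derivative (physHermite n) := rfl

theorem derivative_physHermite_succ :
    ∀ n : ℕ, derivative (physHermite (n + 1)) = C (2 * (n + 1 : ℝ)) * physHermite n
  | 0 => by simp [physHermite, map_ofNat]
  | n + 1 => by
    rw [physHermite_succ (n + 1), derivative_sub, derivative_mul,
      derivative_physHermite_succ n, physHermite_succ n]
    simp only [derivative_mul, derivative_X, derivative_ofNat, derivative_natCast,
      derivative_one, map_mul, map_add, map_natCast, map_one, map_ofNat]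
    push_cast
    ring

theorem derivative_physHermite (n : ℕ) :
    derivative (physHermite n) = C (2 * n : ℝ) * physHermite (n - 1) := by
  cases n with
  | zero => simp [physHermite]
  | succ n => simpa using derivative_physHermite_succ n

theorem two_mul_X_mul_physHermite (n : ℕ) :
    2 * X * physHermite n = physHermite (n + 1) + C (2 * n : ℝ) * physHermite (n - 1) := by
  rw [physHermite_succ, derivative_physHermite]
  ring

theorem hasDerivAt_eval_mul_exp_neg_mul_sq (b : ℝ) (p : ℝ[X]) (x : ℝ) :
    HasDerivAt (fun t => p.eval t * exp (-b * t ^ 2))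
      ((derivative p - C (2 * b) * X * p).eval x * exp (-b * x ^ 2)) x := by
  have hexp : HasDerivAt (fun t => exp (-b * t ^ 2)) (exp (-b * x ^ 2) * (-b * (2 * x))) x := by
    simpa using ((hasDerivAt_pow 2 x).const_mul (-b)).exp
  refine ((p.hasDerivAt x).fun_mul hexp).congr_deriv ?_
  simp only [eval_sub, eval_mul, eval_C, eval_X]
  ring

theorem integrable_eval_mul_exp_neg_mul_sq {b : ℝ} (hb : 0 < b) (p : ℝ[X]) :
    Integrable fun x => p.eval x * exp (-b * x ^ 2) := by
  have hmonomial (k : ℕ) : Integrable fun x : ℝ => x ^ k * exp (-b * x ^ 2) := by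
    simpa using
      integrable_rpow_mul_exp_neg_mul_sq hb (s := k) (neg_one_lt_zero.trans_le k.cast_nonneg)
  simp_rw [eval_eq_sum_range, Finset.sum_mul]
  refine integrable_finsetSum _ fun k _ => ?_
  simpa [mul_assoc] using (hmonomial k).const_mul (p.coeff k)

theorem sqrt_two_mul_eq_two_mul_sqrt_half (x : ℝ) : √(2 * x) = 2 * √(x / 2) := by
  rw [show 2 * x = 2 ^ 2 * (x / 2) by ring, sqrt_mul (by positivity), sqrt_sq zero_le_two]

noncomputable def hermiteConst (n : ℕ) : ℝ :=
  (2 ^ n * n.factorial : ℝ) ^ (-(1 : ℝ) / 2) * π ^ (-(1 : ℝ) / 4)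

theorem iterate_creation_const_mul_exp (K : ℝ) (n : ℕ) :
    (fun f : ℝ → ℝ => fun t => -deriv f t + t * f t)^[n] (fun t => K * exp (-(1 / 2) * t ^ 2))
      = fun t => K * ((physHermite n).eval t * exp (-(1 / 2) * t ^ 2)) := by
  induction n with
  | zero => simp [physHermite]
  | succ n ih =>
    rw [Function.iterate_succ_apply', ih]
    funext t
    rw [((hasDerivAt_eval_mul_exp_neg_mul_sq _ _ t).const_mul K).deriv, physHermite_succ]
    simp only [eval_sub, eval_mul, eval_C, eval_X, eval_ofNat]
    ring

theorem hermiteFun_eq_physHermite (n : ℕ) :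
    hermiteFun n = fun x => hermiteConst n * ((physHermite n).eval x * exp (-(1 / 2) * x ^ 2)) := by
  have hexp : (fun t : ℝ => π ^ (-(1 : ℝ) / 4) * exp (-(t ^ 2) / 2))
      = fun t => π ^ (-(1 : ℝ) / 4) * exp (-(1 / 2) * t ^ 2) := by
    funext t; ring_nf
  funext x
  rw [hermiteFun, hexp, iterate_creation_const_mul_exp, hermiteConst]
  ring

theorem hasDerivAt_hermiteFun (n : ℕ) (x : ℝ) :
    HasDerivAt (hermiteFun n) (hermiteConst n *
      ((derivative (physHermite n) - X * physHermite n).eval x * exp (-(1 / 2) * x ^ 2))) x := by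
  rw [hermiteFun_eq_physHermite]
  simpa using (hasDerivAt_eval_mul_exp_neg_mul_sq (1 / 2) (physHermite n) x).const_mul _

theorem differentiable_hermiteFun (n : ℕ) : Differentiable ℝ (hermiteFun n) :=
  fun x => (hasDerivAt_hermiteFun n x).differentiableAt

theorem hermiteConst_eq_sqrt_mul_succ (n : ℕ) :
    hermiteConst n = √(2 * (n + 1)) * hermiteConst (n + 1) := by
  have hn : (0 : ℝ) < 2 * (n + 1) := by positivity
  have hfac : (2 ^ (n + 1) * (n + 1).factorial : ℝ) = 2 * (n + 1) * (2 ^ n * n.factorial) := by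
    push_cast [Nat.factorial_succ]
    ring
  rw [hermiteConst, hermiteConst, hfac, mul_rpow hn.le (by positivity), sqrt_eq_rpow,
    ← mul_assoc, ← mul_assoc, ← rpow_add hn]
  norm_num

theorem sqrt_succ_half_mul_hermiteConst_succ (n : ℕ) :
    √((n + 1) / 2) * hermiteConst (n + 1) = hermiteConst n / 2 := by
  rw [hermiteConst_eq_sqrt_mul_succ n, sqrt_two_mul_eq_two_mul_sqrt_half]
  ring

theorem sqrt_half_mul_hermiteConst_pred (n : ℕ) :
    √(n / 2) * hermiteConst (n - 1) = n * hermiteConst n := by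
  cases n with
  | zero => simp
  | succ n =>
    rw [Nat.add_sub_cancel, hermiteConst_eq_sqrt_mul_succ n, ← mul_assoc,
      ← sqrt_mul (by positivity)]
    push_cast
    rw [show ((n : ℝ) + 1) / 2 * (2 * (n + 1)) = (n + 1) ^ 2 by ring, sqrt_sq (by positivity)]

-- For `n = 0` the truncated index `n - 1 = 0` is harmless: its coefficient `√(0 / 2)` vanishes.
theorem id_mul_hermiteFun (n : ℕ) :
    (fun x => x * hermiteFun n x)
      = √((n + 1) / 2) • hermiteFun (n + 1) + √(n / 2) • hermiteFun (n - 1) := by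
  funext x
  have hrec := congrArg (eval x) (two_mul_X_mul_physHermite n)
  simp only [eval_add, eval_mul, eval_C, eval_X, eval_ofNat] at hrec
  simp only [Pi.add_apply, Pi.smul_apply, smul_eq_mul, hermiteFun_eq_physHermite]
  linear_combination (-((physHermite (n + 1)).eval x * exp (-(1 / 2) * x ^ 2)))
      * sqrt_succ_half_mul_hermiteConst_succ n
    - ((physHermite (n - 1)).eval x * exp (-(1 / 2) * x ^ 2)) * sqrt_half_mul_hermiteConst_pred n
    + (hermiteConst n * exp (-(1 / 2) * x ^ 2) / 2) * hrec

theorem deriv_hermiteFun (n : ℕ) :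
    deriv (hermiteFun n)
      = √(n / 2) • hermiteFun (n - 1) - √((n + 1) / 2) • hermiteFun (n + 1) := by
  funext x
  have hrec := congrArg (eval x) (two_mul_X_mul_physHermite n)
  simp only [eval_add, eval_mul, eval_C, eval_X, eval_ofNat] at hrec
  rw [(hasDerivAt_hermiteFun n x).deriv, derivative_physHermite]
  simp only [Pi.sub_apply, Pi.smul_apply, smul_eq_mul, hermiteFun_eq_physHermite, eval_sub,
    eval_mul, eval_C, eval_X]
  linear_combination ((physHermite (n + 1)).eval x * exp (-(1 / 2) * x ^ 2))
      * sqrt_succ_half_mul_hermiteConst_succ n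
    - ((physHermite (n - 1)).eval x * exp (-(1 / 2) * x ^ 2)) * sqrt_half_mul_hermiteConst_pred n
    - (hermiteConst n * exp (-(1 / 2) * x ^ 2) / 2) * hrec

theorem integral_physHermite_succ_sq_mul_exp (n : ℕ) :
    ∫ x, (physHermite (n + 1)).eval x ^ 2 * exp (-x ^ 2)
      = 2 * (n + 1) * ∫ x, (physHermite n).eval x ^ 2 * exp (-x ^ 2) := by
  have hint (q : ℝ[X]) : Integrable fun x => q.eval x ^ 2 * exp (-x ^ 2) := by
    have h := integrable_eval_mul_exp_neg_mul_sq one_pos (q ^ 2)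
    simp only [eval_pow, neg_mul, one_mul] at h
    exact h
  set p := physHermite n * physHermite (n + 1)
  have hp : derivative p - C 2 * X * p
      = C (2 * (n + 1) : ℝ) * physHermite n ^ 2 - physHermite (n + 1) ^ 2 := by
    simp only [p, derivative_mul, derivative_physHermite_succ]
    rw [physHermite_succ n]
    simp only [map_mul, map_ofNat]
    ring
  have hibp := integral_eq_zero_of_hasDerivAt_of_integrable
    (fun x => hasDerivAt_eval_mul_exp_neg_mul_sq 1 p x)
    (integrable_eval_mul_exp_neg_mul_sq one_pos _) (integrable_eval_mul_exp_neg_mul_sq one_pos p)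
  simp only [mul_one, neg_mul, one_mul] at hibp
  rw [hp] at hibp
  simp only [eval_sub, eval_mul, eval_C, eval_pow, sub_mul, mul_assoc] at hibp
  rw [integral_sub, integral_const_mul, integral_const_mul] at hibp
  · linarith
  · exact ((hint _).const_mul _).const_mul _
  · exact hint _

theorem integral_physHermite_sq_mul_exp (n : ℕ) :
    ∫ x, (physHermite n).eval x ^ 2 * exp (-x ^ 2) = √π * 2 ^ n * n.factorial := by
  induction n with
  | zero => simpa [physHermite] using integral_gaussian 1
  | succ n ih =>
    rw [integral_physHermite_succ_sq_mul_exp, ih, Nat.factorial_succ]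
    push_cast
    ring

theorem hermiteConst_sq_mul (n : ℕ) :
    hermiteConst n ^ 2 * (√π * 2 ^ n * n.factorial) = 1 := by
  have ha : (0 : ℝ) < 2 ^ n * n.factorial := by positivity
  rw [hermiteConst, mul_pow, ← rpow_natCast, ← rpow_natCast (π ^ _), ← rpow_mul ha.le,
    ← rpow_mul pi_pos.le, sqrt_eq_rpow, show (-1 / 2 * ((2 : ℕ) : ℝ)) = -1 by norm_num,
    show (-1 / 4 * ((2 : ℕ) : ℝ)) = -(1 / 2) by norm_num, rpow_neg_one, rpow_neg pi_pos.le]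
  have : (0 : ℝ) < π ^ (1 / 2 : ℝ) := by positivity
  field_simp

theorem integral_hermiteFun_sq (n : ℕ) : ∫ x, hermiteFun n x ^ 2 = 1 := by
  have hsq (x : ℝ) : hermiteFun n x ^ 2
      = hermiteConst n ^ 2 * ((physHermite n).eval x ^ 2 * exp (-x ^ 2)) := by
    rw [hermiteFun_eq_physHermite, mul_pow, mul_pow, ← exp_nat_mul]
    ring_nf
  simp_rw [hsq]
  rw [integral_const_mul, integral_physHermite_sq_mul_exp, hermiteConst_sq_mul]

theorem memLp_hermiteFun (n : ℕ) : MemLp (hermiteFun n) 2 := by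
  have hcont : Continuous (hermiteFun n) := by
    rw [hermiteFun_eq_physHermite]
    fun_prop
  refine (memLp_two_iff_integrable_sq hcont.aestronglyMeasurable).2 ?_
  exact integrable_of_integral_eq_one (integral_hermiteFun_sq n)

theorem rpow_integral_sq_eq_eLpNorm {f : ℝ → ℝ} (hf : MemLp f 2) :
    (∫ x, f x ^ 2) ^ (1 / 2 : ℝ) = (eLpNorm f 2 volume).toReal := by
  rw [hf.eLpNorm_eq_integral_rpow_norm two_ne_zero ENNReal.ofNat_ne_top,
    ENNReal.toReal_ofReal (by positivity)]
  norm_num [sq_abs]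

theorem eLpNorm_hermiteFun (n : ℕ) : eLpNorm (hermiteFun n) 2 volume = 1 := by
  have h := rpow_integral_sq_eq_eLpNorm (memLp_hermiteFun n)
  rw [integral_hermiteFun_sq, one_rpow] at h
  rw [← ENNReal.ofReal_toReal (memLp_hermiteFun n).eLpNorm_ne_top, ← h, ENNReal.ofReal_one]

theorem sqrt_succ_half_add_sqrt_half_le {m N : ℕ} (hm : m ≤ N) :
    √((m + 1) / 2) + √(m / 2) ≤ √(2 * N + 2) := by
  have hmN : (m : ℝ) ≤ N := by exact_mod_cast hm
  have h1 : √((m + 1) / 2) ≤ √((N + 1) / 2) := sqrt_le_sqrt (by linarith)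
  have h2 : √(m / 2) ≤ √((N + 1) / 2) := sqrt_le_sqrt (by linarith)
  rw [show (2 * N + 2 : ℝ) = 2 * (N + 1) by ring, sqrt_two_mul_eq_two_mul_sqrt_half]
  linarith

theorem sqrt_add_two_mul_rpow_le {a : ℝ} (ha : 0 ≤ a) (ℓ : ℕ) :
    √(a + 2) * a ^ ((ℓ : ℝ) / 2) ≤ (a + 2) ^ (((ℓ + 1 : ℕ) : ℝ) / 2) := by
  have h2 : 0 < a + 2 := by linarith
  calc √(a + 2) * a ^ ((ℓ : ℝ) / 2)
      ≤ (a + 2) ^ (1 / 2 : ℝ) * (a + 2) ^ ((ℓ : ℝ) / 2) := by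
        rw [sqrt_eq_rpow]
        gcongr
        linarith
    _ = (a + 2) ^ (((ℓ + 1 : ℕ) : ℝ) / 2) := by
        rw [← rpow_add h2]
        push_cast
        ring_nf

theorem iterate_id_mul_eq_pow_mul (f : ℝ → ℝ) (ℓ : ℕ) :
    (fun g : ℝ → ℝ => fun x => x * g x)^[ℓ] f = fun x => x ^ ℓ * f x := by
  induction ℓ with
  | zero => simp
  | succ ℓ ih =>
    rw [Function.iterate_succ_apply', ih]
    funext x
    ring

def hermiteL1Ball (N : ℕ) (B : ℝ) : Set (ℝ → ℝ) :=
  {f | ∃ c : ℕ → ℝ,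
    f = ∑ m ∈ range (N + 1), c m • hermiteFun m ∧ ∑ m ∈ range (N + 1), |c m| ≤ B}

namespace hermiteL1Ball

variable {N : ℕ} {B B' : ℝ} {f g : ℝ → ℝ}

theorem hermiteFun_mem {m : ℕ} (hm : m ≤ N) : hermiteFun m ∈ hermiteL1Ball N 1 := by
  have hm' : m ∈ range (N + 1) := mem_range.2 (Nat.lt_succ_of_le hm)
  refine ⟨fun k => if k = m then 1 else 0, ?_, ?_⟩
  · simp [ite_smul, hm']
  · simp [apply_ite, hm']

theorem zero_mem (hB : 0 ≤ B) : (0 : ℝ → ℝ) ∈ hermiteL1Ball N B :=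
  ⟨0, by simp, by simpa using hB⟩

theorem add_mem (hf : f ∈ hermiteL1Ball N B) (hg : g ∈ hermiteL1Ball N B') :
    f + g ∈ hermiteL1Ball N (B + B') := by
  obtain ⟨c, rfl, hc⟩ := hf
  obtain ⟨d, rfl, hd⟩ := hg
  refine ⟨c + d, by simp [add_smul, sum_add_distrib], ?_⟩
  calc ∑ m ∈ range (N + 1), |(c + d) m|
      ≤ ∑ m ∈ range (N + 1), (|c m| + |d m|) := sum_le_sum fun m _ => abs_add_le _ _
    _ ≤ B + B' := by rw [sum_add_distrib]; exact add_le_add hc hd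

theorem smul_mem (a : ℝ) (hf : f ∈ hermiteL1Ball N B) : a • f ∈ hermiteL1Ball N (|a| * B) := by
  obtain ⟨c, rfl, hc⟩ := hf
  refine ⟨a • c, by simp [smul_sum, smul_smul], ?_⟩
  simpa [abs_mul, ← mul_sum] using mul_le_mul_of_nonneg_left hc (abs_nonneg a)

theorem mono {N' : ℕ} (hN : N ≤ N') (hB : B ≤ B') : hermiteL1Ball N B ⊆ hermiteL1Ball N' B' := by
  rintro _ ⟨c, rfl, hc⟩
  have hsub : range (N + 1) ⊆ range (N' + 1) := range_subset_range.2 (by omega)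
  refine ⟨fun m => if m ∈ range (N + 1) then c m else 0, ?_, ?_⟩
  · simp only [ite_smul, zero_smul, sum_ite_mem, inter_eq_right.2 hsub]
  · simpa only [apply_ite abs, abs_zero, sum_ite_mem, inter_eq_right.2 hsub] using hc.trans hB

theorem sum_smul_mem {ι : Type*} (s : Finset ι) (c : ι → ℝ) {g : ι → ℝ → ℝ} {K : ℝ}
    (hg : ∀ i ∈ s, g i ∈ hermiteL1Ball N K) :
    ∑ i ∈ s, c i • g i ∈ hermiteL1Ball N (K * ∑ i ∈ s, |c i|) := by
  classical
  induction s using Finset.induction_on with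
  | empty => simpa using zero_mem le_rfl
  | insert i s hi ih =>
    rw [sum_insert hi, sum_insert hi, mul_add, mul_comm K]
    exact add_mem (smul_mem _ (hg i (mem_insert_self i s)))
      (ih fun j hj => hg j (mem_insert_of_mem hj))

theorem memLp (hf : f ∈ hermiteL1Ball N B) : MemLp f 2 := by
  obtain ⟨c, rfl, -⟩ := hf
  exact memLp_finsetSum' _ fun m _ => (memLp_hermiteFun m).const_smul (c m)

theorem eLpNorm_le (hf : f ∈ hermiteL1Ball N B) : eLpNorm f 2 volume ≤ ENNReal.ofReal B := by
  obtain ⟨c, rfl, hc⟩ := hf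
  calc eLpNorm (∑ m ∈ range (N + 1), c m • hermiteFun m) 2 volume
      ≤ ∑ m ∈ range (N + 1), eLpNorm (c m • hermiteFun m) 2 volume :=
        eLpNorm_sum_le (fun m _ => ((memLp_hermiteFun m).const_smul (c m)).1) one_le_two
    _ = ENNReal.ofReal (∑ m ∈ range (N + 1), |c m|) := by
        rw [ENNReal.ofReal_sum_of_nonneg fun m _ => abs_nonneg _]
        simp [eLpNorm_const_smul, eLpNorm_hermiteFun, Real.enorm_eq_ofReal_abs]
    _ ≤ ENNReal.ofReal B := ENNReal.ofReal_le_ofReal hc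

theorem rpow_integral_sq_le (hf : f ∈ hermiteL1Ball N B) : (∫ x, f x ^ 2) ^ (1 / 2 : ℝ) ≤ B := by
  have hB : 0 ≤ B := by
    obtain ⟨c, -, hc⟩ := hf
    exact (sum_nonneg fun m _ => abs_nonneg (c m)).trans hc
  rw [rpow_integral_sq_eq_eLpNorm (memLp hf)]
  exact ENNReal.toReal_le_of_le_ofReal hB (eLpNorm_le hf)

theorem id_mul_hermiteFun_mem {m : ℕ} (hm : m ≤ N) :
    (fun x => x * hermiteFun m x) ∈ hermiteL1Ball (N + 1) √(2 * N + 2) := by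
  rw [id_mul_hermiteFun]
  refine mono le_rfl ?_ (add_mem (smul_mem _ (hermiteFun_mem (by omega)))
    (smul_mem _ (hermiteFun_mem (by omega))))
  simpa only [abs_of_nonneg (sqrt_nonneg _), mul_one] using sqrt_succ_half_add_sqrt_half_le hm

theorem deriv_hermiteFun_mem {m : ℕ} (hm : m ≤ N) :
    deriv (hermiteFun m) ∈ hermiteL1Ball (N + 1) √(2 * N + 2) := by
  rw [deriv_hermiteFun, sub_eq_add_neg, ← neg_smul]
  refine mono le_rfl ?_ (add_mem (smul_mem _ (hermiteFun_mem (by omega)))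
    (smul_mem _ (hermiteFun_mem (by omega))))
  simpa only [abs_neg, abs_of_nonneg (sqrt_nonneg _), mul_one, add_comm]
    using sqrt_succ_half_add_sqrt_half_le hm

theorem id_mul_mem (hf : f ∈ hermiteL1Ball N B) :
    (fun x => x * f x) ∈ hermiteL1Ball (N + 1) (√(2 * N + 2) * B) := by
  obtain ⟨c, rfl, hc⟩ := hf
  have hsum : (fun x => x * (∑ m ∈ range (N + 1), c m • hermiteFun m) x)
      = ∑ m ∈ range (N + 1), c m • fun x => x * hermiteFun m x := by
    funext x
    simp [Finset.sum_apply, mul_sum, mul_left_comm]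
  rw [hsum]
  exact mono le_rfl (mul_le_mul_of_nonneg_left hc (sqrt_nonneg _))
    (sum_smul_mem _ _ fun m hm => id_mul_hermiteFun_mem (Nat.lt_succ_iff.1 (mem_range.1 hm)))

theorem deriv_mem (hf : f ∈ hermiteL1Ball N B) :
    deriv f ∈ hermiteL1Ball (N + 1) (√(2 * N + 2) * B) := by
  obtain ⟨c, rfl, hc⟩ := hf
  have hsum : deriv (∑ m ∈ range (N + 1), c m • hermiteFun m)
      = ∑ m ∈ range (N + 1), c m • deriv (hermiteFun m) := by
    funext x
    rw [deriv_sum fun m _ => ((differentiable_hermiteFun m).const_smul (c m)) x]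
    simp [deriv_const_smul _ (differentiable_hermiteFun _ x)]
  rw [hsum]
  exact mono le_rfl (mul_le_mul_of_nonneg_left hc (sqrt_nonneg _))
    (sum_smul_mem _ _ fun m hm => deriv_hermiteFun_mem (Nat.lt_succ_iff.1 (mem_range.1 hm)))

theorem iterate_hermiteFun_mem {T : (ℝ → ℝ) → ℝ → ℝ}
    (hT : ∀ {N B f}, f ∈ hermiteL1Ball N B → T f ∈ hermiteL1Ball (N + 1) (√(2 * N + 2) * B))
    (n ℓ : ℕ) : T^[ℓ] (hermiteFun n) ∈ hermiteL1Ball (n + ℓ) ((2 * n + 2 * ℓ) ^ ((ℓ : ℝ) / 2)) := by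
  induction ℓ with
  | zero => simpa using hermiteFun_mem le_rfl
  | succ ℓ ih =>
    rw [Function.iterate_succ_apply', ← Nat.add_assoc]
    refine mono le_rfl ?_ (hT ih)
    have hN : 2 * ((n + ℓ : ℕ) : ℝ) + 2 = 2 * n + 2 * ℓ + 2 := by push_cast; ring
    have hℓ : 2 * n + 2 * ((ℓ + 1 : ℕ) : ℝ) = 2 * n + 2 * ℓ + 2 := by push_cast; ring
    rw [hN, hℓ]
    exact sqrt_add_two_mul_rpow_le (by positivity) ℓ

end hermiteL1Ball

/-- `‖H_n^{(ℓ)}‖_{L²(ℝ)} ≤ (2n+2ℓ)^{ℓ/2}` and `‖x^ℓ H_n‖_{L²(ℝ)} ≤ (2n+2ℓ)^{ℓ/2}`. -/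
theorem hermite_deriv_mul_L2_bound (n ℓ : ℕ) :
    (∫ x : ℝ, (iteratedDeriv ℓ (hermiteFun n) x) ^ 2) ^ ((1 : ℝ) / 2) ≤
        (2 * n + 2 * ℓ : ℝ) ^ ((ℓ : ℝ) / 2) ∧
    (∫ x : ℝ, (x ^ ℓ * hermiteFun n x) ^ 2) ^ ((1 : ℝ) / 2) ≤
        (2 * n + 2 * ℓ : ℝ) ^ ((ℓ : ℝ) / 2) := by
  have hderiv := hermiteL1Ball.iterate_hermiteFun_mem hermiteL1Ball.deriv_mem n ℓ
  have hmul := hermiteL1Ball.iterate_hermiteFun_mem hermiteL1Ball.id_mul_mem n ℓ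
  rw [← iteratedDeriv_eq_iterate] at hderiv
  rw [iterate_id_mul_eq_pow_mul] at hmul
  exact ⟨hermiteL1Ball.rpow_integral_sq_le hderiv, hermiteL1Ball.rpow_integral_sq_le hmul⟩
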